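/- arXiv:2601.17451 — 2 statements merged into one kernel-verified Lean document; each statement's English description precedes it below -/
import Mathlib

section
/- Let S ⊂ ℝ^{n+1} be an immersed submanifold and v a unit section of Tℝ^{n+1} over S, and define Φ_v(p) = (v(p), p − ⟨v(p), p⟩ v(p)). If X ∈ T_pS lies in the kernel of dΦ_v at p, then X ∈ span{v(p)}. In particular, if v(p) ∉ T_pS then dΦ_v|_p is injective. -/
open RealInnerProductSpace

section

variable {E : Type*} [NormedAddCommGroup E] [InnerProductSpace ℝ E] {v : E → E} {p : E}

theorem fderiv_sub_inner_smul_apply (hv : DifferentiableAt ℝ v p) (X : E) :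
    fderiv ℝ (fun x => x - ⟪v x, x⟫ • v x) p X =
      X - ⟪v p, p⟫ • fderiv ℝ v p X - (⟪v p, X⟫ + ⟪fderiv ℝ v p X, p⟫) • v p := by
  have hinner : DifferentiableAt ℝ (fun x => ⟪v x, x⟫) p := hv.inner ℝ differentiableAt_id
  have hsmul : DifferentiableAt ℝ (fun x => ⟪v x, x⟫ • v x) p := hinner.smul hv
  rw [fderiv_fun_sub differentiableAt_fun_id hsmul, fderiv_fun_smul hinner hv]
  simp only [sub_apply, add_apply, smul_apply, ContinuousLinearMap.smulRight_apply,
    fderiv_fun_id, ContinuousLinearMap.id_apply]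
  rw [fderiv_inner_apply ℝ hv differentiableAt_fun_id, fderiv_fun_id,
    ContinuousLinearMap.id_apply]
  abel

/-- The first component gives `dv(X) = 0`, which reduces the second one to
`X - ⟪v p, X⟫ • v p`. -/
theorem mem_span_singleton_of_fderiv_apply_eq_zero (hv : DifferentiableAt ℝ v p) {X : E}
    (hX : fderiv ℝ (fun x => (v x, x - ⟪v x, x⟫ • v x)) p X = 0) : X ∈ ℝ ∙ v p := by
  have hw : DifferentiableAt ℝ (fun x => x - ⟪v x, x⟫ • v x) p :=
    differentiableAt_id.sub ((hv.inner ℝ differentiableAt_id).smul hv)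
  rw [hv.fderiv_prodMk hw, ContinuousLinearMap.prod_apply, Prod.mk_eq_zero] at hX
  obtain ⟨hdv, hproj⟩ := hX
  rw [fderiv_sub_inner_smul_apply hv, hdv] at hproj
  simp only [smul_zero, sub_zero, inner_zero_left, add_zero] at hproj
  exact Submodule.mem_span_singleton.mpr ⟨⟪v p, X⟫, (sub_eq_zero.mp hproj).symm⟩

end

theorem kernel_dPhi_subset_span_general (n : ℕ)
    (v : EuclideanSpace ℝ (Fin (n + 1)) → EuclideanSpace ℝ (Fin (n + 1)))
    (p : EuclideanSpace ℝ (Fin (n + 1)))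
    (T : Submodule ℝ (EuclideanSpace ℝ (Fin (n + 1))))  -- tangent space of S at p
    (hv : DifferentiableAt ℝ v p) :
    (∀ X ∈ T,
      fderiv ℝ (fun x => (v x, x - ⟪v x, x⟫ • v x)) p X = 0 → X ∈ (ℝ ∙ v p)) ∧
    (v p ∉ T →
      ∀ X ∈ T, fderiv ℝ (fun x => (v x, x - ⟪v x, x⟫ • v x)) p X = 0 → X = 0) :=
  ⟨fun _ _ hX => mem_span_singleton_of_fderiv_apply_eq_zero hv hX,
    fun hvT X hXT hX => Submodule.disjoint_def.mp (Submodule.disjoint_span_singleton_of_notMem hvT)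
      X hXT (mem_span_singleton_of_fderiv_apply_eq_zero hv hX)⟩

/-- Let `S ⊂ ℝ^{n+1}` be an immersed submanifold with tangent space `T` at `p`, and `v` a
unit section of `Tℝ^{n+1}` over `S` (extended to the ambient space).  Define
`Φ_v(x) = (v(x), x − ⟨v(x), x⟩ v(x))`.  If `X ∈ T_pS` lies in the kernel of `dΦ_v` at `p`,
then `X ∈ span{v(p)}`.  In particular, if `v(p) ∉ T_pS` then `dΦ_v|_p` is injective. -/
theorem kernel_dPhi_subset_span (n : ℕ)
    (v : EuclideanSpace ℝ (Fin (n + 1)) → EuclideanSpace ℝ (Fin (n + 1)))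
    (p : EuclideanSpace ℝ (Fin (n + 1)))
    (T : Submodule ℝ (EuclideanSpace ℝ (Fin (n + 1))))  -- tangent space of S at p
    (hv : DifferentiableAt ℝ v p)
    (hvunit : ∀ x, ‖v x‖ = 1) :
    (∀ X ∈ T,
      fderiv ℝ (fun x => (v x, x - ⟪v x, x⟫ • v x)) p X = 0 → X ∈ (ℝ ∙ v p)) ∧
    (v p ∉ T →
      ∀ X ∈ T, fderiv ℝ (fun x => (v x, x - ⟪v x, x⟫ • v x)) p X = 0 → X = 0) :=
  kernel_dPhi_subset_span_general n v p T hv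
end

section
/- Let S ⊂ ℝ^{n+1} be an immersed submanifold, v a unit tangent vector field on S, and Φ_v(p) = (v(p), p − ⟨v(p),p⟩v(p)). Then Φ_v is an immersion if and only if ∇̄_v v(p) ≠ 0 for every p ∈ S (v is nowhere geodesic with respect to the flat connection of ℝ^{n+1}). -/
open RealInnerProductSpace

/-!
The kernel of `dΦ_v` at `p` consists of the `X = c v(p)` with `∇̄_X v = 0`, i.e. `c ∇̄_v v(p) = 0`,
so it is trivial exactly when `∇̄_v v(p) ≠ 0`; tangency of `v` makes `v(p)` itself an admissible
test vector in `T_p S`.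
-/

namespace NowhereGeodesic

variable {E : Type*} [NormedAddCommGroup E] [InnerProductSpace ℝ E]

def phi (v : E → E) (x : E) : E × E :=
  (v x, x - ⟪v x, x⟫ • v x)

theorem fderiv_phi_apply {v : E → E} {p : E} (hv : DifferentiableAt ℝ v p) (X : E) :
    fderiv ℝ (phi v) p X =
      (fderiv ℝ v p X, X - (⟪v p, X⟫ + ⟪fderiv ℝ v p X, p⟫) • v p - ⟪v p, p⟫ • fderiv ℝ v p X) := by
  have hinner : DifferentiableAt ℝ (fun x => ⟪v x, x⟫) p := hv.inner ℝ differentiableAt_fun_id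
  have hsmul : DifferentiableAt ℝ (fun x => ⟪v x, x⟫ • v x) p := hinner.smul hv
  unfold phi
  rw [hv.fderiv_prodMk (f₂ := fun x => x - ⟪v x, x⟫ • v x) (differentiableAt_fun_id.sub hsmul)]
  simp only [ContinuousLinearMap.prod_apply, fderiv_fun_sub differentiableAt_fun_id hsmul,
    sub_apply, fderiv_fun_id, ContinuousLinearMap.id_apply,
    fderiv_fun_smul hinner hv, add_apply, smul_apply,
    ContinuousLinearMap.smulRight_apply, fderiv_inner_apply ℝ hv differentiableAt_fun_id]
  rw [Prod.mk.injEq]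
  exact ⟨rfl, by abel⟩

theorem fderiv_phi_apply_eq_zero_iff {v : E → E} {p : E} (hv : DifferentiableAt ℝ v p) (X : E) :
    fderiv ℝ (phi v) p X = 0 ↔ fderiv ℝ v p X = 0 ∧ X = ⟪v p, X⟫ • v p := by
  rw [fderiv_phi_apply hv, Prod.mk_eq_zero]
  refine and_congr_right fun hX => ?_
  rw [hX, inner_zero_left, add_zero, smul_zero, sub_zero, sub_eq_zero]

theorem fderiv_phi_injOn_iff {v : E → E} {p : E} (hv : DifferentiableAt ℝ v p)
    (hunit : ‖v p‖ = 1) {T : Submodule ℝ E} (htan : v p ∈ T) :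
    (∀ X ∈ T, fderiv ℝ (phi v) p X = 0 → X = 0) ↔ fderiv ℝ v p (v p) ≠ 0 := by
  have hinner : ⟪v p, v p⟫ = 1 := by rw [real_inner_self_eq_norm_sq, hunit, one_pow]
  constructor
  · intro hinj hgeod
    have hvp : v p = 0 := hinj (v p) htan <| (fderiv_phi_apply_eq_zero_iff hv _).2
      ⟨hgeod, by rw [hinner, one_smul]⟩
    simp [hvp] at hunit
  · intro hgeod X _ hX
    obtain ⟨hdX, hX⟩ := (fderiv_phi_apply_eq_zero_iff hv X).1 hX
    rw [hX, map_smul, smul_eq_zero] at hdX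
    rw [hX, hdX.resolve_right hgeod, zero_smul]

end NowhereGeodesic

/-- Let `S ⊂ ℝ^{n+1}` be an immersed submanifold with tangent spaces `T p` for `p ∈ S`,
and `v` a unit tangent vector field on `S` (extended to the ambient space).  With
`Φ_v(x) = (v(x), x − ⟨v(x), x⟩ v(x))`, the map `Φ_v` is an immersion (its differential is
injective on each tangent space) if and only if `∇̄_v v(p) ≠ 0` for every `p ∈ S`, i.e. `v`
is nowhere geodesic with respect to the flat connection `∇̄` of `ℝ^{n+1}`. -/
theorem Phi_immersion_iff_nowhere_geodesic (n : ℕ)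
    (S : Set (EuclideanSpace ℝ (Fin (n + 1))))
    (v : EuclideanSpace ℝ (Fin (n + 1)) → EuclideanSpace ℝ (Fin (n + 1)))
    (T : EuclideanSpace ℝ (Fin (n + 1)) → Submodule ℝ (EuclideanSpace ℝ (Fin (n + 1))))
    (hv : Differentiable ℝ v)
    (hvunit : ∀ x, ‖v x‖ = 1)
    (hvtan : ∀ p ∈ S, v p ∈ T p) :  -- v is tangent to S
    (∀ p ∈ S, ∀ X ∈ T p,
        fderiv ℝ (fun x => (v x, x - ⟪v x, x⟫ • v x)) p X = 0 → X = 0) ↔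
      (∀ p ∈ S, fderiv ℝ v p (v p) ≠ 0) :=
  forall₂_congr fun p hp => NowhereGeodesic.fderiv_phi_injOn_iff (hv p) (hvunit p) (hvtan p hp)
end
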